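/- Let β > 0, δ > 0 and 0 < ε < √(2β)/2, set t_n = nδ, p_n = exp(−δβ e^{2(√(2β)−2ε)t_n}) and q_n = ⌈exp(e^{2(√(2β)−3ε)t_n})⌉. Then the series ∑_{n≥0} (1 − (1 − p_n)^{q_n}) converges. -/

import Mathlib

/-!
The `n`-th term is at most `q_n p_n ≤ 2 exp(A_n - B_n)` (union bound, with
`A_n = e^{2(√(2β)-3ε)nδ}` and `B_n = δβ e^{2(√(2β)-2ε)nδ}`). The second double exponential
grows strictly faster than the first, so `B_n - A_n - n → ∞`, and the terms are eventually
dominated by the geometric sequence `e^{-n}`.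
-/

open Real Filter Asymptotics

lemma one_sub_one_sub_pow_nonneg {p : ℝ} (hp₀ : 0 ≤ p) (hp₁ : p ≤ 1) (q : ℕ) :
    0 ≤ 1 - (1 - p) ^ q :=
  sub_nonneg.2 (pow_le_one₀ (by linarith) (by linarith))

lemma one_sub_one_sub_pow_le_mul {p : ℝ} (hp : p ≤ 2) (q : ℕ) :
    1 - (1 - p) ^ q ≤ q * p := by
  have bernoulli := one_add_mul_le_pow (a := -p) (by linarith) q
  rw [← sub_eq_add_neg] at bernoulli
  linarith

lemma abs_one_sub_one_sub_exp_neg_pow_ceil_exp_le {A B : ℝ} (hA : 0 ≤ A) (hB : 0 ≤ B) :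
    |1 - (1 - exp (-B)) ^ ⌈exp A⌉₊| ≤ 2 * exp (A - B) := by
  have hp₁ : exp (-B) ≤ 1 := exp_le_one_iff.2 (neg_nonpos.2 hB)
  have hq : (⌈exp A⌉₊ : ℝ) ≤ 2 * exp A :=
    Nat.ceil_le_two_mul (by linarith [one_le_exp hA])
  rw [abs_of_nonneg (one_sub_one_sub_pow_nonneg (exp_pos _).le hp₁ _)]
  calc 1 - (1 - exp (-B)) ^ ⌈exp A⌉₊
      ≤ ⌈exp A⌉₊ * exp (-B) := one_sub_one_sub_pow_le_mul (by linarith) _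
    _ ≤ 2 * exp A * exp (-B) := by gcongr
    _ = 2 * exp (A - B) := by rw [mul_assoc, ← exp_add, sub_eq_add_neg]

lemma tendsto_mul_exp_sub_exp_sub_atTop {a b c : ℝ} (hc : 0 < c) (hb : 0 < b) (hab : a < b) :
    Tendsto (fun x => c * exp (b * x) - exp (a * x) - x) atTop atTop := by
  have h_exp : (fun x => exp (a * x)) =o[atTop] fun x => c * exp (b * x) := by
    refine (isLittleO_exp_comp_exp_comp.2 ?_).const_mul_right' (isUnit_iff_ne_zero.2 hc.ne')
    simpa only [← sub_mul, id] using tendsto_id.const_mul_atTop (sub_pos.2 hab)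
  have h_id : (fun x : ℝ => x) =o[atTop] fun x => c * exp (b * x) := by
    simpa only [pow_one] using
      (isLittleO_pow_exp_pos_mul_atTop 1 hb).const_mul_right' (isUnit_iff_ne_zero.2 hc.ne')
  have h_equiv := (IsEquivalent.refl (u := fun x => c * exp (b * x))).sub_isLittleO
    (h_exp.add h_id)
  refine h_equiv.symm.tendsto_atTop ?_ |>.congr fun x => by simp only [Pi.sub_apply]; ring
  exact (tendsto_exp_atTop.comp (tendsto_id.const_mul_atTop hb)).const_mul_atTop hc

lemma summable_exp_of_tendsto_neg_sub_atTop {u : ℕ → ℝ}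
    (hu : Tendsto (fun n : ℕ => -(n : ℝ) - u n) atTop atTop) :
    Summable fun n => exp (u n) :=
  summable_of_isBigO_nat summable_exp_neg_nat (isLittleO_exp_comp_exp_comp.2 hu).isBigO

/-- With `p_n = exp(-δβ e^{2(√(2β)-2ε) nδ})` and `q_n = ⌈exp(e^{2(√(2β)-3ε) nδ})⌉`,
the series `∑ (1 - (1 - p_n)^{q_n})` converges. -/
theorem summable_geometric_tail
    (β δ ε : ℝ) (hβ : 0 < β) (hδ : 0 < δ) (hε : 0 < ε) (hε' : ε < Real.sqrt (2 * β) / 2) :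
    Summable (fun n : ℕ =>
      1 - (1 - Real.exp (-(δ * β * Real.exp (2 * (Real.sqrt (2 * β) - 2 * ε) * (n * δ))))) ^
        (⌈Real.exp (Real.exp (2 * (Real.sqrt (2 * β) - 3 * ε) * (n * δ)))⌉₊ : ℕ)) := by
  set s := Real.sqrt (2 * β)
  set A : ℕ → ℝ := fun n => exp (2 * (s - 3 * ε) * (n * δ))
  set B : ℕ → ℝ := fun n => δ * β * exp (2 * (s - 2 * ε) * (n * δ))
  have hB_sub_A : Tendsto (fun n : ℕ => -(n : ℝ) - (A n - B n)) atTop atTop := by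
    have h := tendsto_mul_exp_sub_exp_sub_atTop (mul_pos hδ hβ)
      (by nlinarith : 0 < 2 * (s - 2 * ε) * δ)
      (by nlinarith : 2 * (s - 3 * ε) * δ < 2 * (s - 2 * ε) * δ)
    refine (h.comp tendsto_natCast_atTop_atTop).congr fun n => ?_
    simp only [Function.comp_apply, A, B]
    ring_nf
  refine .of_norm_bounded ((summable_exp_of_tendsto_neg_sub_atTop hB_sub_A).mul_left 2)
    fun n => ?_
  exact abs_one_sub_one_sub_exp_neg_pow_ceil_exp_le (exp_pos _).le (by positivity)
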